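/- For unit vectors u, v in C^n ⊗ C^m, the fidelity between the reduced states satisfies F(Tr_Y(uu*), Tr_Y(vv*)) = ‖Tr_X(vu*)‖₁, where Tr_Y is the partial trace over the second tensor factor and Tr_X is the partial trace over the first tensor factor. -/

import Mathlib

/-!
Reshape `u, v` into `n × m` matrices `U, V`. Then `Tr_Y(uu*) = U Uᴴ`, `Tr_Y(vv*) = V Vᴴ` and
`Tr_X(vu*) = (Uᴴ V)ᵀ`. The trace norm `‖A‖₁ = Tr √(AᴴA)` depends only on `AᴴA`, and is invariant
under `A ↦ Aᴴ` (since `AᴴA` and `AAᴴ` have the same nonzero eigenvalues) and under `A ↦ Aᵀ`.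
As `√(U Uᴴ)² = U Uᴴ`, the matrices `√(U Uᴴ) Y` and `Uᴴ Y` have the same Gram matrix, hence the
same trace norm; applying this on both sides of an adjoint gives
`‖√(U Uᴴ) √(V Vᴴ)‖₁ = ‖Uᴴ √(V Vᴴ)‖₁ = ‖√(V Vᴴ) U‖₁ = ‖Vᴴ U‖₁ = ‖Uᴴ V‖₁`.
-/

open Matrix Kronecker
open scoped ComplexOrder

/-- Positive semidefinite square root, as defined in Mathlib of December 2024. -/
noncomputable def Matrix.PosSemidef.sqrt {n 𝕜 : Type*} [Fintype n] [RCLike 𝕜] [DecidableEq n]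
    {A : Matrix n n 𝕜} (hA : A.PosSemidef) : Matrix n n 𝕜 :=
  hA.1.eigenvectorUnitary.1 * diagonal ((↑) ∘ Real.sqrt ∘ hA.1.eigenvalues) *
    (star hA.1.eigenvectorUnitary : Matrix n n 𝕜)

/-- Trace norm `‖A‖₁ = Tr √(Aᴴ A)` of a complex matrix. -/
noncomputable def traceNorm {α β : Type*} [Fintype α] [Fintype β] [DecidableEq α] [DecidableEq β]
    (A : Matrix α β ℂ) : ℝ :=
  ((Matrix.posSemidef_conjTranspose_mul_self A).sqrt.trace).re

/-- Spectral norm (operator norm w.r.t. Euclidean norms). -/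
noncomputable def specNorm {α β : Type*} [Fintype α] [Fintype β] [DecidableEq α] [DecidableEq β]
    (A : Matrix α β ℂ) : ℝ :=
  ‖LinearMap.toContinuousLinearMap (Matrix.toEuclideanLin A)‖

/-- Frobenius norm. -/
noncomputable def frobNorm {α β : Type*} [Fintype α] [Fintype β]
    (A : Matrix α β ℂ) : ℝ :=
  Real.sqrt ((Aᴴ * A).trace.re)

/-- Positive semidefinite square root (junk value `0` off the PSD cone). -/
noncomputable def msqrt {α : Type*} [Fintype α] [DecidableEq α]
    (P : Matrix α α ℂ) : Matrix α α ℂ :=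
  open scoped Classical in
  if h : P.PosSemidef then h.sqrt else 0

/-- Fidelity `F(P,Q) = ‖√P √Q‖₁`. -/
noncomputable def fid {α : Type*} [Fintype α] [DecidableEq α]
    (P Q : Matrix α α ℂ) : ℝ :=
  traceNorm (msqrt P * msqrt Q)

/-- Partial trace over the second (right) tensor factor. -/
noncomputable def ptraceRight {a b : ℕ} (M : Matrix (Fin a × Fin b) (Fin a × Fin b) ℂ) :
    Matrix (Fin a) (Fin a) ℂ :=
  Matrix.of fun i j => ∑ s : Fin b, M (i, s) (j, s)

/-- Partial trace over the first (left) tensor factor. -/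
noncomputable def ptraceLeft {a b : ℕ} (M : Matrix (Fin a × Fin b) (Fin a × Fin b) ℂ) :
    Matrix (Fin b) (Fin b) ℂ :=
  Matrix.of fun i j => ∑ s : Fin a, M (s, i) (s, j)

/-- `Φ ⊗ id` acting on `L(Cⁿ ⊗ Cᵏ)`. -/
noncomputable def tensorId {n m k : ℕ}
    (Φ : Matrix (Fin n) (Fin n) ℂ → Matrix (Fin m) (Fin m) ℂ)
    (M : Matrix (Fin n × Fin k) (Fin n × Fin k) ℂ) :
    Matrix (Fin m × Fin k) (Fin m × Fin k) ℂ :=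
  Matrix.of fun p q => Φ (Matrix.of fun a c => M (a, p.2) (c, q.2)) p.1 q.1

/-- Completely bounded trace norm `¦¦¦Φ¦¦¦₁ = ‖Φ ⊗ id_{L(Cⁿ)}‖₁`. -/
noncomputable def cbTraceNorm {n m : ℕ}
    (Φ : Matrix (Fin n) (Fin n) ℂ → Matrix (Fin m) (Fin m) ℂ) : ℝ :=
  sSup {c : ℝ | ∃ M : Matrix (Fin n × Fin n) (Fin n × Fin n) ℂ,
    traceNorm M ≤ 1 ∧ c = traceNorm (tensorId Φ M)}

/-- Completely bounded spectral norm of `Ψ : L(Cᵐ) → L(Cⁿ)`, with ancilla `Cⁿ`. -/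
noncomputable def cbSpecNorm {m n : ℕ}
    (Ψ : Matrix (Fin m) (Fin m) ℂ → Matrix (Fin n) (Fin n) ℂ) : ℝ :=
  sSup {c : ℝ | ∃ M : Matrix (Fin m × Fin n) (Fin m × Fin n) ℂ,
    specNorm M ≤ 1 ∧ c = specNorm (tensorId Ψ M)}

/-- Choi–Jamiołkowski representation `J(Φ) = ∑ᵢⱼ Φ(Eᵢⱼ) ⊗ Eᵢⱼ`. -/
noncomputable def choi {n m : ℕ}
    (Φ : Matrix (Fin n) (Fin n) ℂ → Matrix (Fin m) (Fin m) ℂ) :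
    Matrix (Fin m × Fin n) (Fin m × Fin n) ℂ :=
  ∑ i : Fin n, ∑ j : Fin n, (Φ (Matrix.single i j 1)) ⊗ₖ (Matrix.single i j 1)

/-- vec mapping. -/
def vecM {n : ℕ} (A : Matrix (Fin n) (Fin n) ℂ) : Fin n × Fin n → ℂ := fun p => A p.1 p.2


open scoped ComplexOrder

section
open scoped MatrixOrder

variable {ι κ γ : Type*} [Fintype ι] [Fintype κ] [Fintype γ]
  [DecidableEq ι] [DecidableEq κ] [DecidableEq γ]

lemma Matrix.PosSemidef.sqrt_eq_cfcSqrt {M : Matrix ι ι ℂ} (hM : M.PosSemidef) :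
    hM.sqrt = CFC.sqrt M := by
  rw [CFC.sqrt_eq_cfc, cfc_nnreal_eq_real _ M hM.nonneg, hM.1.cfc_eq, IsHermitian.cfc,
    Unitary.conjStarAlgAut_apply, Matrix.PosSemidef.sqrt]
  congr 3
  funext i
  simp [Real.coe_toNNReal', max_eq_left (hM.eigenvalues_nonneg i)]

lemma Matrix.PosSemidef.trace_sqrt {M : Matrix ι ι ℂ} (hM : M.PosSemidef) :
    hM.sqrt.trace = ∑ i, (√(hM.1.eigenvalues i) : ℂ) := by
  rw [Matrix.PosSemidef.sqrt, trace_mul_cycle,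
    mem_unitaryGroup_iff'.mp hM.1.eigenvectorUnitary.2, one_mul, trace_diagonal]
  rfl

lemma msqrt_of_posSemidef {M : Matrix ι ι ℂ} (hM : M.PosSemidef) : msqrt M = hM.sqrt :=
  dif_pos hM

lemma msqrt_eq_cfcSqrt {M : Matrix ι ι ℂ} (hM : M.PosSemidef) : msqrt M = CFC.sqrt M := by
  rw [msqrt_of_posSemidef hM, hM.sqrt_eq_cfcSqrt]

lemma msqrt_mul_self {M : Matrix ι ι ℂ} (hM : M.PosSemidef) : msqrt M * msqrt M = M := by
  rw [msqrt_eq_cfcSqrt hM]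
  exact CFC.sqrt_mul_sqrt_self M hM.nonneg

lemma isHermitian_msqrt (M : Matrix ι ι ℂ) : (msqrt M).IsHermitian := by
  by_cases hM : M.PosSemidef
  · rw [msqrt_eq_cfcSqrt hM]
    exact (CFC.sqrt_nonneg M).posSemidef.1
  · simp [msqrt, hM]

lemma msqrt_transpose (M : Matrix ι ι ℂ) : msqrt Mᵀ = (msqrt M)ᵀ := by
  by_cases hM : M.PosSemidef
  · rw [msqrt_eq_cfcSqrt hM.transpose, msqrt_eq_cfcSqrt hM]
    refine CFC.sqrt_unique ?_ (CFC.sqrt_nonneg M).posSemidef.transpose.nonneg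
    rw [← transpose_mul, CFC.sqrt_mul_sqrt_self M hM.nonneg]
  · simp [msqrt, hM, posSemidef_transpose_iff]

lemma trace_msqrt {M : Matrix ι ι ℂ} (hM : M.PosSemidef) :
    (msqrt M).trace = (M.charpoly.roots.map fun z => (√z.re : ℂ)).sum := by
  simp [msqrt_of_posSemidef hM, hM.trace_sqrt, hM.1.roots_charpoly_eq_eigenvalues]

lemma traceNorm_eq_re_trace_msqrt (A : Matrix ι κ ℂ) :
    traceNorm A = (msqrt (Aᴴ * A)).trace.re := by
  rw [msqrt_of_posSemidef (posSemidef_conjTranspose_mul_self A), traceNorm]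

lemma traceNorm_congr {A : Matrix ι κ ℂ} {B : Matrix γ κ ℂ} (h : Aᴴ * A = Bᴴ * B) :
    traceNorm A = traceNorm B := by
  rw [traceNorm_eq_re_trace_msqrt, traceNorm_eq_re_trace_msqrt, h]

open Polynomial in
lemma traceNorm_conjTranspose (A : Matrix ι κ ℂ) : traceNorm Aᴴ = traceNorm A := by
  have hroots : Fintype.card κ • ({0} : Multiset ℂ) + (A * Aᴴ).charpoly.roots
      = Fintype.card ι • {0} + (Aᴴ * A).charpoly.roots := by
    simpa [roots_mul, X_ne_zero, charpoly_monic, Monic.ne_zero] using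
      congrArg roots (charpoly_mul_comm' A Aᴴ)
  rw [traceNorm_eq_re_trace_msqrt, traceNorm_eq_re_trace_msqrt, conjTranspose_conjTranspose,
    trace_msqrt (posSemidef_self_mul_conjTranspose A),
    trace_msqrt (posSemidef_conjTranspose_mul_self A)]
  simpa [Multiset.map_nsmul, Multiset.sum_nsmul] using
    congrArg (fun s : Multiset ℂ => (s.map fun z => (√z.re : ℂ)).sum.re) hroots

lemma traceNorm_transpose (A : Matrix ι κ ℂ) : traceNorm Aᵀ = traceNorm A := by
  rw [← traceNorm_conjTranspose A, traceNorm_eq_re_trace_msqrt, traceNorm_eq_re_trace_msqrt,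
    conjTranspose_conjTranspose, conjTranspose_transpose_eq_transpose_conjTranspose,
    ← transpose_mul, msqrt_transpose, trace_transpose]

lemma traceNorm_msqrt_mul (U : Matrix ι κ ℂ) (Y : Matrix ι γ ℂ) :
    traceNorm (msqrt (U * Uᴴ) * Y) = traceNorm (Uᴴ * Y) := by
  apply traceNorm_congr
  rw [conjTranspose_mul, (isHermitian_msqrt _).eq, conjTranspose_mul,
    conjTranspose_conjTranspose, Matrix.mul_assoc, ← Matrix.mul_assoc (msqrt _),
    msqrt_mul_self (posSemidef_self_mul_conjTranspose U)]
  simp only [Matrix.mul_assoc]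

lemma fid_mul_conjTranspose (U : Matrix ι κ ℂ) (V : Matrix ι γ ℂ) :
    fid (U * Uᴴ) (V * Vᴴ) = traceNorm (Uᴴ * V) := by
  calc fid (U * Uᴴ) (V * Vᴴ) = traceNorm (Uᴴ * msqrt (V * Vᴴ)) := traceNorm_msqrt_mul U _
    _ = traceNorm (msqrt (V * Vᴴ) * U) := by
      rw [← traceNorm_conjTranspose, conjTranspose_mul, (isHermitian_msqrt _).eq,
        conjTranspose_conjTranspose]
    _ = traceNorm (Vᴴ * U) := traceNorm_msqrt_mul V U
    _ = traceNorm (Uᴴ * V) := by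
      rw [← traceNorm_conjTranspose, conjTranspose_mul, conjTranspose_conjTranspose]

end

lemma ptraceRight_vecMulVec {a b : ℕ} (u w : Fin a × Fin b → ℂ) :
    ptraceRight (vecMulVec u (star w)) = of (Function.curry u) * (of (Function.curry w))ᴴ := by
  ext i j
  simp [ptraceRight, vecMulVec_apply, mul_apply]

lemma ptraceLeft_vecMulVec {a b : ℕ} (v u : Fin a × Fin b → ℂ) :
    ptraceLeft (vecMulVec v (star u)) = ((of (Function.curry u))ᴴ * of (Function.curry v))ᵀ := by
  ext i j
  simp [ptraceLeft, vecMulVec_apply, mul_apply, mul_comm]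

theorem stmt6_general {n m : ℕ} (u v : Fin n × Fin m → ℂ) :
    fid (ptraceRight (Matrix.vecMulVec u (star u))) (ptraceRight (Matrix.vecMulVec v (star v)))
      = traceNorm (ptraceLeft (Matrix.vecMulVec v (star u))) := by
  rw [ptraceRight_vecMulVec, ptraceRight_vecMulVec, ptraceLeft_vecMulVec, traceNorm_transpose,
    fid_mul_conjTranspose]

/-- fidelity of reduced states equals a trace norm of a partial trace. -/
theorem stmt6 {n m : ℕ} (u v : Fin n × Fin m → ℂ)
    (hu : ∑ p, ‖u p‖ ^ 2 = 1) (hv : ∑ p, ‖v p‖ ^ 2 = 1) :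
    fid (ptraceRight (Matrix.vecMulVec u (star u))) (ptraceRight (Matrix.vecMulVec v (star v)))
      = traceNorm (ptraceLeft (Matrix.vecMulVec v (star u))) :=
  stmt6_general u v
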